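/- If δ_i > 0 and δ_i ∉ [d − √(2d), d + √(2d)] for all i ∈ {1,…,n}, then there exists x_+ > 0 such that F(x) > 0 for all x ≥ x_+; in particular, F has a zero on (0,∞). -/

import Mathlib

open Real Matrix Filter Topology

/-- The digamma function `ψ(x) = d/dx log Γ(x)`. -/
noncomputable def digamma (x : ℝ) : ℝ := deriv (fun y => Real.log (Real.Gamma y)) x

/-- `φ(x) := ψ(x) - log x`. -/
noncomputable def phiFn (x : ℝ) : ℝ := digamma x - Real.log x

/-- `F_s(x) := φ(x) − φ(x+t) + (x+t)/(x+s) − log((x+t)/(x+s)) − 1`. -/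
noncomputable def Fs (t s x : ℝ) : ℝ :=
  phiFn x - phiFn (x + t) + (x + t) / (x + s) - Real.log ((x + t) / (x + s)) - 1

/-!
As `x → ∞`, `F_s(x) = ((t - s)² - t) / (2x²) + O(x⁻³)`. Writing `(x + t) / (x + s) = 1 + v`,
the elementary part `v - log (1 + v)` contributes `v² / 2 ≈ (t - s)² / (2x²)`, while
`φ(x) - φ(x + t)` contributes `-t / (2x²)`, because
`ψ(x) = log x - 1/(2x) - 1/(12x²) + O(x⁻³)`. That expansion comes from telescoping the recurrence
`ψ(x + 1) = ψ(x) + 1/x`: the one-step error of the expansion is an explicit elementary function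
of `u = 1/x` whose derivative is `-u⁴ / (6 (1 + u)³)`, so it is at most `u⁵ / 6`. The hypothesis
on `δ` says exactly that `(t - s)² > t`, so each `F_{s_i}`, and hence `F`, is eventually positive.
As `x → 0⁺`, `φ(x) ≈ -1/x - log x → -∞` while the rest of `F_s` stays bounded, so `F` is
negative near `0`, and the intermediate value theorem gives the zero.
-/

open Set

theorem hasDerivAt_log_Gamma {x : ℝ} (hx : 0 < x) :
    HasDerivAt (fun y => log (Gamma y)) (digamma x) x :=
  ((differentiableOn_Gamma_Ioi.differentiableAt (Ioi_mem_nhds hx)).log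
    (Gamma_pos_of_pos hx).ne').hasDerivAt

theorem digamma_add_one {x : ℝ} (hx : 0 < x) : digamma (x + 1) = digamma x + x⁻¹ := by
  have hshift : HasDerivAt (fun y => log (Gamma (y + 1))) (digamma (x + 1)) x := by
    simpa using (hasDerivAt_log_Gamma (by linarith : 0 < x + 1)).comp_add_const x 1
  have hsplit : HasDerivAt (fun y => log y + log (Gamma y)) (x⁻¹ + digamma x) x :=
    (hasDerivAt_log hx.ne').add (hasDerivAt_log_Gamma hx)
  have heq : (fun y => log (Gamma (y + 1))) =ᶠ[𝓝 x] fun y => log y + log (Gamma y) := by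
    filter_upwards [eventually_gt_nhds hx] with y hy
    rw [Gamma_add_one hy.ne', log_mul hy.ne' (Gamma_pos_of_pos hy).ne']
  rw [add_comm (digamma x), (hshift.congr_of_eventuallyEq heq.symm).unique hsplit]

theorem slope_log_Gamma {x : ℝ} (hx : 0 < x) : slope (log ∘ Gamma) x (x + 1) = log x := by
  simp [slope_def_field, Gamma_add_one hx.ne', log_mul hx.ne' (Gamma_pos_of_pos hx).ne']

theorem digamma_le_log {x : ℝ} (hx : 0 < x) : digamma x ≤ log x :=
  slope_log_Gamma hx ▸ convexOn_log_Gamma.deriv_le_slope hx (by simp; linarith) (by linarith)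
    (hasDerivAt_log_Gamma hx).differentiableAt

theorem log_sub_inv_le_digamma {x : ℝ} (hx : 0 < x) : log x - x⁻¹ ≤ digamma x := by
  have h : log x ≤ digamma (x + 1) :=
    slope_log_Gamma hx ▸ convexOn_log_Gamma.slope_le_deriv hx (by simp; linarith) (by linarith)
      (hasDerivAt_log_Gamma (by linarith : 0 < x + 1)).differentiableAt
  rw [digamma_add_one hx] at h
  linarith

theorem analyticAt_Gamma {x : ℝ} (hx : 0 < x) : AnalyticAt ℝ Gamma x := by
  have hC : AnalyticAt ℂ Complex.Gamma (x : ℂ) := by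
    refine DifferentiableOn.analyticAt (s := {z : ℂ | 0 < z.re})
      (fun z hz => (Complex.differentiableAt_Gamma z fun m hm => ?_).differentiableWithinAt)
      ((isOpen_lt continuous_const Complex.continuous_re).mem_nhds (by simpa using hx))
    have := congrArg Complex.re hm
    simp only [Complex.neg_re, Complex.natCast_re] at this
    have : (0 : ℝ) < z.re := hz
    linarith [(m.cast_nonneg : (0 : ℝ) ≤ m)]
  have hR : AnalyticAt ℝ (fun y : ℝ => (Complex.Gamma y).re) x :=
    Complex.reCLM.analyticAt _ |>.comp (hC.restrictScalars.comp (Complex.ofRealCLM.analyticAt x))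
  simpa [Complex.Gamma_ofReal] using hR

theorem continuousOn_digamma : ContinuousOn digamma (Ioi 0) :=
  (AnalyticOnNhd.log (fun _ hx => analyticAt_Gamma hx) fun _ hx => Gamma_pos_of_pos hx).deriv
    |>.continuousOn

theorem tendsto_phiFn_atTop : Tendsto phiFn atTop (𝓝 0) := by
  refine tendsto_of_tendsto_of_tendsto_of_le_of_le' (tendsto_inv_atTop_zero.neg.trans ?_)
    tendsto_const_nhds ?_ ?_
  · simp
  · filter_upwards [eventually_gt_atTop 0] with x hx
    linarith [log_sub_inv_le_digamma hx, show phiFn x = digamma x - log x from rfl]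
  · filter_upwards [eventually_gt_atTop 0] with x hx
    linarith [digamma_le_log hx, show phiFn x = digamma x - log x from rfl]

theorem continuousAt_phiFn {x : ℝ} (hx : 0 < x) : ContinuousAt phiFn x :=
  (continuousOn_digamma.continuousAt (Ioi_mem_nhds hx)).sub (continuousAt_log hx.ne')

theorem continuousAt_Fs {t s x : ℝ} (ht : 0 ≤ t) (hs : 0 ≤ s) (hx : 0 < x) :
    ContinuousAt (Fs t s) x := by
  have hxt : 0 < x + t := by linarith
  have hxs : 0 < x + s := by linarith
  have hφ := continuousAt_phiFn hx
  have hφt : ContinuousAt (fun y => phiFn (y + t)) x :=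
    (continuousAt_phiFn hxt).comp_of_eq (continuous_add_const t).continuousAt rfl
  have hratio : ContinuousAt (fun y => (y + t) / (y + s)) x := by fun_prop (disch := exact hxs.ne')
  have hlog : ContinuousAt (fun y => log ((y + t) / (y + s))) x :=
    hratio.log (div_pos hxt hxs).ne'
  unfold Fs
  fun_prop

theorem tendsto_neg_inv_sub_log_nhdsGT_zero :
    Tendsto (fun y : ℝ => -y⁻¹ - log y) (𝓝[>] 0) atBot := by
  have h : Tendsto (fun y : ℝ => -1 - log y * y) (𝓝[>] 0) (𝓝 (-1)) := by
    simpa using (tendsto_log_mul_rpow_nhdsGT_zero one_pos).const_sub (-1)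
  refine (tendsto_inv_nhdsGT_zero.atTop_mul_neg (by norm_num) h).congr' ?_
  filter_upwards [self_mem_nhdsWithin] with y (hy : 0 < y)
  field_simp

theorem tendsto_phiFn_nhdsGT_zero : Tendsto phiFn (𝓝[>] 0) atBot := by
  have hψ : Tendsto (fun y => digamma (y + 1)) (𝓝[>] 0) (𝓝 (digamma 1)) := by
    refine ((continuousOn_digamma.continuousAt (Ioi_mem_nhds one_pos)).tendsto.comp ?_).mono_left
      nhdsWithin_le_nhds
    simpa using (continuous_add_const (1 : ℝ)).tendsto 0
  refine (tendsto_neg_inv_sub_log_nhdsGT_zero.atBot_add hψ).congr' ?_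
  filter_upwards [self_mem_nhdsWithin] with y (hy : 0 < y)
  rw [phiFn, digamma_add_one hy]
  ring

theorem tendsto_Fs_nhdsGT_zero {t s : ℝ} (ht : 0 < t) (hs : 0 < s) :
    Tendsto (Fs t s) (𝓝[>] 0) atBot := by
  have hrest : ContinuousAt
      (fun y => -phiFn (y + t) + ((y + t) / (y + s) - log ((y + t) / (y + s)) - 1)) 0 := by
    have hshift : ContinuousAt (fun y => phiFn (y + t)) 0 :=
      (continuousAt_phiFn (by simpa using ht)).comp_of_eq (continuous_add_const t).continuousAt rfl
    exact hshift.neg.add (by fun_prop (disch := positivity))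
  refine (tendsto_phiFn_nhdsGT_zero.atBot_add (hrest.tendsto.mono_left nhdsWithin_le_nhds)).congr
    fun y => ?_
  simp only [Fs]
  ring

theorem abs_sub_log_one_add_sub_le {u : ℝ} (hu : 0 ≤ u) :
    |u - log (1 + u) - u ^ 2 / (2 * (1 + u)) - u ^ 3 * (2 + u) / (12 * (1 + u) ^ 2)|
      ≤ u ^ 5 / 6 := by
  let f : ℝ → ℝ := fun v => v - log (1 + v) - v ^ 2 / (2 * (1 + v))
    - v ^ 3 * (2 + v) / (12 * (1 + v) ^ 2)
  have hf : ∀ v ∈ Icc 0 u, HasDerivWithinAt f (-(v ^ 4 / (6 * (1 + v) ^ 3))) (Icc 0 u) v := by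
    intro v hv
    have hv1 : 1 + v ≠ 0 := by linarith [hv.1]
    have hderiv := ((((hasDerivAt_id v).sub (((hasDerivAt_id v).const_add 1).log hv1)).sub
      (((hasDerivAt_id v).pow 2).div ((hasDerivAt_id v).const_add 1 |>.const_mul 2)
        (by simpa using hv1))).sub
      ((((hasDerivAt_id v).pow 3).mul ((hasDerivAt_id v).const_add 2)).div
        (((hasDerivAt_id v).const_add 1).pow 2 |>.const_mul 12) (by simpa using hv1)))
    refine (hderiv.congr_deriv ?_).hasDerivWithinAt
    simp only [id, Pi.pow_apply, Pi.mul_apply]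
    field_simp
    ring
  have hbound : ∀ v ∈ Ico 0 u, ‖-(v ^ 4 / (6 * (1 + v) ^ 3))‖ ≤ u ^ 4 / 6 := by
    intro v hv
    rw [norm_neg, Real.norm_of_nonneg (by have := hv.1; positivity)]
    calc v ^ 4 / (6 * (1 + v) ^ 3) ≤ v ^ 4 / 6 := by
          gcongr
          exact le_mul_of_one_le_right (by norm_num) (one_le_pow₀ (by linarith [hv.1]))
      _ ≤ u ^ 4 / 6 := by gcongr; exacts [hv.1, hv.2.le]
  have := norm_image_sub_le_of_norm_deriv_le_segment' hf hbound u (right_mem_Icc.2 hu)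
  simp only [f, Real.norm_eq_abs] at this
  convert this using 1
  · simp
  · ring

theorem abs_le_of_abs_sub_le_sub {a b : ℕ → ℝ} (ha : Tendsto a atTop (𝓝 0))
    (hb : Tendsto b atTop (𝓝 0)) (hstep : ∀ k, |a (k + 1) - a k| ≤ b k - b (k + 1)) :
    |a 0| ≤ b 0 := by
  have hpartial : ∀ N, |a 0 - a N| ≤ b 0 - b N := by
    intro N
    induction N with
    | zero => simp
    | succ N ih =>
      calc |a 0 - a (N + 1)| ≤ |a 0 - a N| + |a (N + 1) - a N| := by
            simpa [abs_sub_comm (a (N + 1))] using abs_sub_le (a 0) (a N) (a (N + 1))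
        _ ≤ b 0 - b (N + 1) := by linarith [hstep N]
  simpa using le_of_tendsto_of_tendsto' ((tendsto_const_nhds.sub ha).abs)
    (tendsto_const_nhds.sub hb) hpartial

noncomputable def digammaRemainder (x : ℝ) : ℝ := phiFn x + (2 * x)⁻¹ + (12 * x ^ 2)⁻¹

theorem tendsto_digammaRemainder_atTop : Tendsto digammaRemainder atTop (𝓝 0) := by
  have h2 : Tendsto (fun x : ℝ => (2 * x)⁻¹) atTop (𝓝 0) :=
    tendsto_inv_atTop_zero.comp (tendsto_id.const_mul_atTop two_pos)
  have h12 : Tendsto (fun x : ℝ => (12 * x ^ 2)⁻¹) atTop (𝓝 0) :=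
    tendsto_inv_atTop_zero.comp ((tendsto_pow_atTop two_ne_zero).const_mul_atTop (by norm_num))
  have h := (tendsto_phiFn_atTop.add h2).add h12
  rw [add_zero, add_zero] at h
  exact h

theorem digammaRemainder_add_one_sub {x : ℝ} (hx : 0 < x) :
    digammaRemainder (x + 1) - digammaRemainder x = x⁻¹ - log (1 + x⁻¹)
      - (x⁻¹) ^ 2 / (2 * (1 + x⁻¹)) - (x⁻¹) ^ 3 * (2 + x⁻¹) / (12 * (1 + x⁻¹) ^ 2) := by
  have hlog : log (x + 1) = log x + log (1 + x⁻¹) := by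
    rw [← log_mul hx.ne' (by positivity)]
    congr 1
    field_simp
  simp only [digammaRemainder, phiFn, digamma_add_one hx, hlog]
  field_simp
  ring

theorem inv_pow_five_div_six_le_inv_cube_sub {y : ℝ} (hy : 1 ≤ y) :
    (y⁻¹) ^ 5 / 6 ≤ (y ^ 3)⁻¹ - ((y + 1) ^ 3)⁻¹ := by
  have hy0 : 0 < y := by linarith
  rw [inv_pow, le_sub_iff_add_le, ← sub_nonneg]
  have key : (y ^ 3)⁻¹ - ((y ^ 5)⁻¹ / 6 + ((y + 1) ^ 3)⁻¹)
      = (6 * y ^ 2 * (3 * y ^ 2 + 3 * y + 1) - (y + 1) ^ 3) / (6 * y ^ 5 * (y + 1) ^ 3) := by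
    field_simp
    ring
  rw [key]
  apply div_nonneg _ (by positivity)
  nlinarith [pow_le_pow_left₀ zero_le_one hy 2, pow_le_pow_left₀ zero_le_one hy 3]

theorem abs_digammaRemainder_le {x : ℝ} (hx : 1 ≤ x) : |digammaRemainder x| ≤ (x ^ 3)⁻¹ := by
  have hshift : Tendsto (fun N : ℕ => x + N) atTop atTop :=
    tendsto_atTop_add_const_left _ x tendsto_natCast_atTop_atTop
  have h := abs_le_of_abs_sub_le_sub (a := fun N => digammaRemainder (x + N))
    (b := fun N => ((x + N) ^ 3)⁻¹) (tendsto_digammaRemainder_atTop.comp hshift)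
    (tendsto_inv_atTop_zero.comp ((tendsto_pow_atTop three_ne_zero).comp hshift)) fun k => ?_
  · simpa using h
  · have hk : 1 ≤ x + k := by linarith [k.cast_nonneg (α := ℝ)]
    push_cast
    rw [← add_assoc, digammaRemainder_add_one_sub (by linarith)]
    exact (abs_sub_log_one_add_sub_le (by positivity)).trans
      (inv_pow_five_div_six_le_inv_cube_sub hk)

theorem phiFn_sub_phiFn_add_ge {t x : ℝ} (ht : 0 ≤ t) (hx : 1 ≤ x) :
    -t / (2 * x ^ 2) - (2 + t / 6) / x ^ 3 ≤ phiFn x - phiFn (x + t) := by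
  have hx0 : 0 < x := by linarith
  have hxt : 0 < x + t := by linarith
  have hR := abs_le.1 (abs_digammaRemainder_le hx)
  have hRt := abs_le.1 (abs_digammaRemainder_le (by linarith : 1 ≤ x + t))
  have hcube : ((x + t) ^ 3)⁻¹ ≤ (x ^ 3)⁻¹ := by gcongr; linarith
  have hsplit : phiFn x - phiFn (x + t) - (-t / (2 * x ^ 2) - (2 + t / 6) / x ^ 3)
      = (digammaRemainder x - digammaRemainder (x + t) + 2 * (x ^ 3)⁻¹)
        + t ^ 2 / (2 * x ^ 2 * (x + t)) + t ^ 2 * (3 * x + 2 * t) / (12 * x ^ 3 * (x + t) ^ 2) := by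
    simp only [digammaRemainder]
    field_simp
    ring
  have : 0 ≤ t ^ 2 / (2 * x ^ 2 * (x + t))
      + t ^ 2 * (3 * x + 2 * t) / (12 * x ^ 3 * (x + t) ^ 2) := by
    positivity
  linarith

theorem log_one_add_le_cubic {v : ℝ} (hv : -1 < v) : log (1 + v) ≤ v - v ^ 2 / 2 + v ^ 3 / 3 := by
  let g : ℝ → ℝ := fun w => w - w ^ 2 / 2 + w ^ 3 / 3 - log (1 + w)
  have hg : ∀ w, -1 < w → HasDerivAt g (w ^ 3 / (1 + w)) w := by
    intro w hw
    have hw1 : 1 + w ≠ 0 := by linarith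
    have hderiv := ((((hasDerivAt_id w).sub ((hasDerivAt_id w).pow 2 |>.div_const 2)).add
      ((hasDerivAt_id w).pow 3 |>.div_const 3)).sub (((hasDerivAt_id w).const_add 1).log hw1))
    refine hderiv.congr_deriv ?_
    simp only [id]
    field_simp
    ring
  have hcont : ContinuousOn g (Ioi (-1)) := fun w hw =>
    (hg w hw).continuousAt.continuousWithinAt
  suffices g 0 ≤ g v by simp [g] at this; linarith
  rcases le_or_gt 0 v with h0 | h0
  · refine monotoneOn_of_hasDerivWithinAt_nonneg (f' := fun w => w ^ 3 / (1 + w)) (convex_Icc 0 v)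
      (hcont.mono fun w hw => show -1 < w by linarith [hw.1])
      (fun w hw => ?_) (fun w hw => ?_) (left_mem_Icc.2 h0) (right_mem_Icc.2 h0) h0
    all_goals rw [interior_Icc] at hw
    · exact (hg w (by linarith [hw.1])).hasDerivWithinAt
    · have : 0 < 1 + w := by linarith [hw.1]
      have : 0 < w := hw.1
      positivity
  · refine antitoneOn_of_hasDerivWithinAt_nonpos (f' := fun w => w ^ 3 / (1 + w)) (convex_Icc v 0)
      (hcont.mono fun w hw => show -1 < w from hv.trans_le hw.1)
      (fun w hw => ?_) (fun w hw => ?_) (left_mem_Icc.2 h0.le) (right_mem_Icc.2 h0.le) h0.le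
    all_goals rw [interior_Icc] at hw
    · exact (hg w (by linarith [hw.1])).hasDerivWithinAt
    · exact div_nonpos_of_nonpos_of_nonneg (Odd.pow_nonpos (by decide) hw.2.le)
        (by linarith [hw.1])

theorem sq_div_sub_le_ratio_sub_log_ratio {t s x : ℝ} (ht : 0 ≤ t) (hs : 0 ≤ s) (hx : 1 ≤ x) :
    (t - s) ^ 2 / (2 * x ^ 2) - ((t - s) ^ 2 * s * (2 + s) / 2 + |t - s| ^ 3 / 3) / x ^ 3
      ≤ (x + t) / (x + s) - log ((x + t) / (x + s)) - 1 := by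
  have hx0 : 0 < x := by linarith
  have hxs : 0 < x + s := by linarith
  set v := (t - s) / (x + s) with hv
  have hratio : (x + t) / (x + s) = 1 + v := by rw [hv]; field_simp; ring
  have hlog := log_one_add_le_cubic (v := v)
    (by linarith [hratio ▸ div_pos (by linarith : 0 < x + t) hxs])
  have hsq : (t - s) ^ 2 / (2 * x ^ 2) - (t - s) ^ 2 * s * (2 + s) / 2 / x ^ 3 ≤ v ^ 2 / 2 := by
    rw [← sub_nonneg]
    have key : v ^ 2 / 2 - ((t - s) ^ 2 / (2 * x ^ 2) - (t - s) ^ 2 * s * (2 + s) / 2 / x ^ 3)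
        = (t - s) ^ 2 * s * ((2 + s) * (x + s) ^ 2 - x * (2 * x + s))
          / (2 * x ^ 3 * (x + s) ^ 2) := by
      rw [hv]
      field_simp
      ring
    rw [key]
    have : 0 ≤ (2 + s) * (x + s) ^ 2 - x * (2 * x + s) := by nlinarith
    positivity
  have hcube : v ^ 3 ≤ |t - s| ^ 3 / x ^ 3 := by
    calc v ^ 3 ≤ |v| ^ 3 := by rw [← abs_pow]; exact le_abs_self _
      _ ≤ (|t - s| / x) ^ 3 := by
        rw [hv, abs_div, abs_of_pos hxs]
        gcongr
        linarith
      _ = |t - s| ^ 3 / x ^ 3 := div_pow _ _ _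
  rw [hratio, add_div, div_right_comm _ (3 : ℝ)]
  linarith

theorem exists_Fs_ge {t s : ℝ} (ht : 0 ≤ t) (hs : 0 ≤ s) :
    ∃ C, ∀ x ≥ 1, ((t - s) ^ 2 - t) / 2 / x ^ 2 - C / x ^ 3 ≤ Fs t s x := by
  refine ⟨2 + t / 6 + ((t - s) ^ 2 * s * (2 + s) / 2 + |t - s| ^ 3 / 3), fun x hx => ?_⟩
  have hφ := phiFn_sub_phiFn_add_ge ht hx
  have hratio := sq_div_sub_le_ratio_sub_log_ratio ht hs hx
  have hsplit : ((t - s) ^ 2 - t) / 2 / x ^ 2 = (t - s) ^ 2 / (2 * x ^ 2) - t / (2 * x ^ 2) := by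
    ring
  rw [Fs, hsplit, add_div]
  linarith [neg_div (2 * x ^ 2) t]

theorem eventually_pos_div_sq_sub_div_cube {a : ℝ} (ha : 0 < a) (C : ℝ) :
    ∀ᶠ x : ℝ in atTop, 0 < a / x ^ 2 - C / x ^ 3 := by
  filter_upwards [eventually_gt_atTop 0, eventually_gt_atTop (C / a)] with x hx hCx
  have hCx' : C < a * x := by rwa [div_lt_iff₀' ha] at hCx
  have : a / x ^ 2 - C / x ^ 3 = (a * x - C) / x ^ 3 := by field_simp
  rw [this]
  exact div_pos (by linarith) (by positivity)

theorem eventually_pos_Fs {t s : ℝ} (ht : 0 ≤ t) (hs : 0 ≤ s) (hts : t < (t - s) ^ 2) :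
    ∀ᶠ x in atTop, 0 < Fs t s x := by
  obtain ⟨C, hC⟩ := exists_Fs_ge ht hs
  filter_upwards [eventually_pos_div_sq_sub_div_cube (by linarith : 0 < ((t - s) ^ 2 - t) / 2) C,
    eventually_ge_atTop 1] with x hpos hx
  exact hpos.trans_le (hC x hx)

theorem lt_sq_half_sub_half_of_notMem_Icc {d δ : ℝ}
    (hδ : δ ∉ Icc (d - √(2 * d)) (d + √(2 * d))) : d / 2 < (d / 2 - δ / 2) ^ 2 := by
  have hfar : √(2 * d) < |d - δ| := not_le.1 (mem_Icc_iff_abs_le.not.2 hδ)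
  have hsq : 2 * d < (d - δ) ^ 2 := by
    rw [← sq_abs]
    exact (sqrt_lt' ((sqrt_nonneg _).trans_lt hfar)).1 hfar
  nlinarith

theorem F_pos_eventually_and_has_zero_general (d n : ℕ) (hd : 1 ≤ d) (t : ℝ) (ht : t = d / 2)
    (w : Fin n → ℝ) (hw : ∀ i, 0 < w i) (hw1 : ∑ i, w i = 1)
    (δ : Fin n → ℝ)
    (hδpos : ∀ i, 0 < δ i)
    (hδnotmem : ∀ i, δ i ∉
      Set.Icc ((d : ℝ) - Real.sqrt (2 * d)) ((d : ℝ) + Real.sqrt (2 * d))) :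
    (∃ xp > (0 : ℝ), ∀ y ≥ xp, 0 < ∑ i, w i * Fs t (δ i / 2) y) ∧
    ∃ y > (0 : ℝ), ∑ i, w i * Fs t (δ i / 2) y = 0 := by
  have ht0 : 0 < t := ht ▸ half_pos (Nat.cast_pos.2 hd)
  have hs : ∀ i, 0 < δ i / 2 := fun i => half_pos (hδpos i)
  have hne : (Finset.univ : Finset (Fin n)).Nonempty :=
    Finset.nonempty_of_sum_ne_zero (hw1 ▸ one_ne_zero)
  have hlarge : ∀ᶠ y in atTop, 0 < ∑ i, w i * Fs t (δ i / 2) y := by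
    filter_upwards [eventually_all.2 fun i => eventually_pos_Fs ht0.le (hs i).le (by
      rw [ht]; exact lt_sq_half_sub_half_of_notMem_Icc (hδnotmem i))] with y hy
    exact Finset.sum_pos (fun i _ => mul_pos (hw i) (hy i)) hne
  have hsmall : ∀ᶠ y in 𝓝[>] 0, ∑ i, w i * Fs t (δ i / 2) y < 0 := by
    filter_upwards [eventually_all.2 fun i =>
      (tendsto_Fs_nhdsGT_zero ht0 (hs i)).eventually_lt_atBot 0] with y hy
    exact Finset.sum_neg (fun i _ => mul_neg_of_pos_of_neg (hw i) (hy i)) hne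
  obtain ⟨a, ha⟩ := eventually_atTop.1 hlarge
  have hxp : 0 < max a 1 := lt_max_of_lt_right one_pos
  obtain ⟨y₀, hy₀, hy₀mem⟩ := (hsmall.and (Ioo_mem_nhdsGT hxp)).exists
  have hcont : ContinuousOn (fun y => ∑ i, w i * Fs t (δ i / 2) y) (Icc y₀ (max a 1)) :=
    continuousOn_finsetSum _ fun i _ y hy => (continuousAt_const.mul
      (continuousAt_Fs ht0.le (hs i).le (hy₀mem.1.trans_le hy.1))).continuousWithinAt
  obtain ⟨y, hy, hzero⟩ := intermediate_value_Icc hy₀mem.2.le hcont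
    ⟨hy₀.le, (ha _ (le_max_left a 1)).le⟩
  exact ⟨⟨max a 1, hxp, fun y hy => ha y ((le_max_left a 1).trans hy)⟩,
    y, hy₀mem.1.trans_le hy.1, hzero⟩

/-- with `t = d/2`, `d ≥ 1`, samples `x_i ∈ ℝ^d`, weights `w_i > 0` summing to 1,
`μ ∈ ℝ^d`, `Σ` symmetric positive definite, `δ_i := (x_i − μ)ᵀ Σ⁻¹ (x_i − μ)`, `s_i := δ_i/2`
and `F := Σᵢ wᵢ F_{s_i}`: if `δ_i > 0` and `δ_i ∉ [d − √(2d), d + √(2d)]` for all `i`, then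
there exists `x₊ > 0` with `F(x) > 0` for all `x ≥ x₊`; in particular `F` has a zero
on `(0,∞)`. -/
theorem F_pos_eventually_and_has_zero (d n : ℕ) (hd : 1 ≤ d) (t : ℝ) (ht : t = d / 2)
    (x : Fin n → Fin d → ℝ) (w : Fin n → ℝ) (hw : ∀ i, 0 < w i) (hw1 : ∑ i, w i = 1)
    (μ : Fin d → ℝ) (S : Matrix (Fin d) (Fin d) ℝ) (hS : S.PosDef)
    (δ : Fin n → ℝ) (hδ : ∀ i, δ i = (x i - μ) ⬝ᵥ S⁻¹ *ᵥ (x i - μ))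
    (hδpos : ∀ i, 0 < δ i)
    (hδnotmem : ∀ i, δ i ∉
      Set.Icc ((d : ℝ) - Real.sqrt (2 * d)) ((d : ℝ) + Real.sqrt (2 * d))) :
    (∃ xp > (0 : ℝ), ∀ y ≥ xp, 0 < ∑ i, w i * Fs t (δ i / 2) y) ∧
    ∃ y > (0 : ℝ), ∑ i, w i * Fs t (δ i / 2) y = 0 :=
  F_pos_eventually_and_has_zero_general d n hd t ht w hw hw1 δ hδpos hδnotmem
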